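/- arXiv:1112.0791 — 2 statements merged into one kernel-verified Lean document; each statement's English description precedes it below -/
import Mathlib

section
/- For all CO problems P and Q, if P ≡^s Q then P ≡_g Q. -/
open scoped Classical

/-- Propositional formulas over a universe `U` of atoms, built from atoms,
`⊥`, conjunction, disjunction and implication. -/
inductive Formula (U : Type) : Type where
  | atom : U → Formula U
  | bot  : Formula U
  | conj : Formula U → Formula U → Formula U
  | disj : Formula U → Formula U → Formula U
  | imp  : Formula U → Formula U → Formula U

variable {U : Type}

/-- Classical satisfaction `I ⊨ φ`. -/
def Sat (I : Set U) : Formula U → Prop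
  | .atom a => a ∈ I
  | .bot => False
  | .conj φ ψ => Sat I φ ∧ Sat I ψ
  | .disj φ ψ => Sat I φ ∨ Sat I ψ
  | .imp φ ψ => Sat I φ → Sat I ψ

/-- Classical satisfaction of a theory. -/
def SatTheory (I : Set U) (T : Set (Formula U)) : Prop := ∀ φ ∈ T, Sat I φ

/-- `Mod T`: the classical models of a theory `T`. -/
def models (T : Set (Formula U)) : Set (Set U) := {I | SatTheory I T}

/-- HT-satisfaction `⟨I, J⟩ ⊨_HT φ` (for `I ⊆ J`). -/
def SatHT (I J : Set U) : Formula U → Prop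
  | .atom a => a ∈ I
  | .bot => False
  | .conj φ ψ => SatHT I J φ ∧ SatHT I J ψ
  | .disj φ ψ => SatHT I J φ ∨ SatHT I J ψ
  | .imp φ ψ => Sat J (Formula.imp φ ψ) ∧ (¬ SatHT I J φ ∨ SatHT I J ψ)

/-- HT-satisfaction of a theory. -/
def SatHTTheory (I J : Set U) (T : Set (Formula U)) : Prop := ∀ φ ∈ T, SatHT I J φ

/-- `HT T`: the set of HT-models `⟨I,J⟩` (with `I ⊆ J`) of a theory `T`. -/
def HTmod (T : Set (Formula U)) : Set (Set U × Set U) :=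
  {p | p.1 ⊆ p.2 ∧ SatHTTheory p.1 p.2 T}

/-- `AS T`: the equilibrium models (answer sets) of a theory `T`. -/
def AS (T : Set (Formula U)) : Set (Set U) :=
  {I | SatHTTheory I I T ∧ ∀ J : Set U, J ⊂ I → ¬ SatHTTheory J I T}

/-- A ranked preference rule `φ₁ > ⋯ > φₖ ←ʲ ψ` with nonempty head and rank `j ≥ 1`. -/
structure Rule (U : Type) : Type where
  head : List (Formula U)
  body : Formula U
  rank : ℕ
  head_ne : head ≠ []
  rank_pos : 1 ≤ rank

/-- Satisfaction degree `v_I(r)`: the least (1-based) index of a satisfied head formula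
if `I` satisfies the body and some head formula; `1` otherwise. -/
noncomputable def degree (I : Set U) (r : Rule U) : ℕ :=
  if Sat I r.body ∧ ∃ φ ∈ r.head, Sat I φ then
    sInf {n : ℕ | ∃ k : Fin r.head.length, n = k.1 + 1 ∧ Sat I (r.head.get k)}
  else 1

/-- The strict preference `I >^S J` induced by a selector `S`. -/
def gtSel (S : Set (Rule U)) (I J : Set U) : Prop :=
  ∃ r' ∈ S, degree I r' < degree J r' ∧
    (∀ r ∈ S, r.rank = r'.rank → degree I r ≤ degree J r) ∧
    (∀ r ∈ S, r.rank < r'.rank → degree I r = degree J r)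

/-- The indifference `I ≈^S J` induced by a selector `S`. -/
def simSel (S : Set (Rule U)) (I J : Set U) : Prop :=
  ∀ r ∈ S, degree I r = degree J r

/-- The preference `I ≥^S J` induced by a selector `S`. -/
def geSel (S : Set (Rule U)) (I J : Set U) : Prop :=
  simSel S I J ∨ gtSel S I J

/-- An optimization problem: a generator theory plus a finite selector. -/
structure OptProblem (U : Type) : Type where
  gen : Set (Formula U)
  sel : Set (Rule U)
  sel_finite : sel.Finite

/-- Union of optimization problems. -/
def OptProblem.union (P Q : OptProblem U) : OptProblem U :=
  ⟨P.gen ∪ Q.gen, P.sel ∪ Q.sel, P.sel_finite.union Q.sel_finite⟩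

/-- `P_{<i}`: the restriction of `P` to preference rules of rank `< i`. -/
def OptProblem.below (P : OptProblem U) (i : ℕ) : OptProblem U :=
  ⟨P.gen, {r ∈ P.sel | r.rank < i}, P.sel_finite.subset (Set.sep_subset _ _)⟩

/-- The two semantics for generators: classical (CO problems) and
equilibrium-model/answer-set (ASO problems). -/
inductive Sem : Type where
  | co : Sem
  | aso : Sem

/-- `μ(P)`: the outcomes of `P` under the chosen semantics. -/
def outcomes (sem : Sem) (P : OptProblem U) : Set (Set U) :=
  match sem with
  | Sem.co => models P.gen
  | Sem.aso => AS P.gen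

/-- `π(P)`: the preferred (optimal) outcomes of `P`. -/
def pref (sem : Sem) (P : OptProblem U) : Set (Set U) :=
  {I | I ∈ outcomes sem P ∧ ¬ ∃ J ∈ outcomes sem P, gtSel P.sel J I}

/-- `diff^P(I,J)`: the largest `k` with `I ≈^{P_{<k}} J` (`∞` if this holds for all `k`). -/
noncomputable def diff (P : OptProblem U) (I J : Set U) : ℕ∞ :=
  if ∀ k : ℕ, simSel (P.below k).sel I J then ⊤
  else ((sSup {k : ℕ | simSel (P.below k).sel I J} : ℕ) : ℕ∞)

/-- Restriction `≻_V` of a relation on interpretations to a set `V` of interpretations. -/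
def restrictRel (rel : Set U → Set U → Prop) (V : Set (Set U)) : Set U → Set U → Prop :=
  fun A B => rel A B ∧ A ∈ V ∧ B ∈ V

/-- All rules of `S` have rank in the interval `[i,j]` (`j` may be `∞`). -/
def inRankInterval (i : ℕ) (j : ℕ∞) (S : Set (Rule U)) : Prop :=
  ∀ r ∈ S, i ≤ r.rank ∧ (r.rank : ℕ∞) ≤ j

/-- Strong sel-equivalence `P ≡^{s,[i,j]} Q`: same preferred outcomes under addition of any
context from `L^{s,[i,j]}` (empty generator, selector with ranks in `[i,j]`). -/
def seqv (sem : Sem) (i : ℕ) (j : ℕ∞) (P Q : OptProblem U) : Prop :=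
  ∀ R : OptProblem U, R.gen = ∅ → inRankInterval i j R.sel →
    pref sem (P.union R) = pref sem (Q.union R)

/-- Strong gen-equivalence `P ≡_g Q`: same preferred outcomes under addition of any
generator context from `L^g` (empty selector). -/
def geqv (sem : Sem) (P Q : OptProblem U) : Prop :=
  ∀ R : OptProblem U, R.sel = ∅ →
    pref sem (P.union R) = pref sem (Q.union R)

/-- Strong (combined) equivalence `P ≡^{s,[i,j]}_g Q`: same preferred outcomes under addition
of any context from `L^{[i,j]}` (arbitrary generator, selector with ranks in `[i,j]`). -/
def sgeqv (sem : Sem) (i : ℕ) (j : ℕ∞) (P Q : OptProblem U) : Prop :=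
  ∀ R : OptProblem U, inRankInterval i j R.sel →
    pref sem (P.union R) = pref sem (Q.union R)

/-! The degrees of the rules of a finite selector `S` depend only on the truth values of finitely
many formulas, their bodies and heads. Hence the conjunction `χ` of the literals over these
formulas that are true in `I` holds in `I`, and every interpretation satisfying it is
`≈^S`-equivalent to `I`. Adding the rank-1 rule `χ > ⊤` as a selector context leaves a model `J`
of `χ` competing only against models of `χ`. Choosing `χ` to describe `I` shows that strongly
sel-equivalent CO problems have the same models; choosing it to describe `I` or `J` shows that
they induce the same strict preference between models. Models and strict preference together
determine the preferred outcomes under any generator context. -/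

namespace Formula

def top : Formula U := .imp .bot .bot

def neg (φ : Formula U) : Formula U := .imp φ .bot

def conjs : List (Formula U) → Formula U
  | [] => top
  | φ :: l => .conj φ (conjs l)

noncomputable def diagram (I : Set U) (l : List (Formula U)) : Formula U :=
  conjs (l.map fun φ => if Sat I φ then φ else neg φ)

end Formula

open Formula

@[simp] lemma sat_top (I : Set U) : Sat I (top : Formula U) := id

@[simp] lemma sat_neg {I : Set U} {φ : Formula U} : Sat I φ.neg ↔ ¬ Sat I φ := Iff.rfl

@[simp] lemma sat_conjs {I : Set U} : ∀ {l : List (Formula U)}, Sat I (conjs l) ↔ ∀ φ ∈ l, Sat I φ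
  | [] => by simp [conjs]
  | φ :: l => by simp [conjs, Sat, sat_conjs (l := l)]

lemma sat_diagram {K I : Set U} {l : List (Formula U)} :
    Sat K (diagram I l) ↔ ∀ φ ∈ l, (Sat K φ ↔ Sat I φ) := by
  simp only [diagram, sat_conjs, List.forall_mem_map]
  refine forall₂_congr fun φ _ => ?_
  by_cases hφ : Sat I φ <;> simp [hφ]

lemma sat_diagram_self (I : Set U) (l : List (Formula U)) : Sat I (diagram I l) :=
  sat_diagram.mpr fun _ _ => Iff.rfl

lemma one_le_degree (I : Set U) (r : Rule U) : 1 ≤ degree I r := by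
  unfold degree
  split_ifs with happ
  · obtain ⟨φ, hφ, hsat⟩ := happ.2
    obtain ⟨k, rfl⟩ := List.get_of_mem hφ
    exact le_csInf ⟨_, k, rfl, hsat⟩ (by rintro _ ⟨k, rfl, -⟩; omega)
  · rfl

lemma degree_eq_one_iff {I : Set U} {r : Rule U} :
    degree I r = 1 ↔
      (Sat I r.body ∧ ∃ φ ∈ r.head, Sat I φ) → Sat I (r.head.head r.head_ne) := by
  have hlen : 0 < r.head.length := List.length_pos_iff.mpr r.head_ne
  unfold degree
  split_ifs with happ
  · set D := {n : ℕ | ∃ k : Fin r.head.length, n = k.1 + 1 ∧ Sat I (r.head.get k)}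
    have hD : 1 ∈ D ↔ Sat I (r.head.head r.head_ne) := by
      simp only [D, Set.mem_ofPred_eq, List.head_eq_getElem, List.get_eq_getElem]
      refine ⟨?_, fun h0 => ⟨⟨0, hlen⟩, rfl, h0⟩⟩
      rintro ⟨⟨k, _⟩, hk1, hsat⟩
      obtain rfl : k = 0 := Nat.succ_injective hk1.symm
      exact hsat
    have hbound : ∀ n ∈ D, 1 ≤ n := by rintro _ ⟨k, rfl, -⟩; omega
    rw [← hD, imp_iff_right happ]
    constructor
    · intro h1
      obtain ⟨φ, hφ, hsat⟩ := happ.2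
      obtain ⟨k, rfl⟩ := List.get_of_mem hφ
      exact h1 ▸ Nat.sInf_mem (s := D) ⟨_, k, rfl, hsat⟩
    · exact fun h1 => le_antisymm (Nat.sInf_le h1) (le_csInf ⟨1, h1⟩ hbound)
  · simp [happ]

lemma degree_congr {K I : Set U} {r : Rule U} (hbody : Sat K r.body ↔ Sat I r.body)
    (hhead : ∀ φ ∈ r.head, Sat K φ ↔ Sat I φ) : degree K r = degree I r := by
  have hget (k : Fin r.head.length) : Sat K (r.head.get k) ↔ Sat I (r.head.get k) :=
    hhead _ (List.get_mem _ _)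
  unfold degree
  simp only [hbody, hget, exists_congr fun φ => and_congr_right (hhead φ)]

lemma exists_formula_forall_simSel {T : Set (Rule U)} (hT : T.Finite) (I : Set U) :
    ∃ χ : Formula U, Sat I χ ∧ ∀ K, Sat K χ → simSel T K I := by
  refine ⟨diagram I (hT.toFinset.toList.flatMap fun r => r.body :: r.head),
    sat_diagram_self _ _, fun K hK r hr => ?_⟩
  have hmem : ∀ φ ∈ r.body :: r.head, Sat K φ ↔ Sat I φ := fun φ hφ =>
    sat_diagram.mp hK φ (List.mem_flatMap.mpr ⟨r, by simpa using hr, hφ⟩)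
  exact degree_congr (hmem _ List.mem_cons_self) fun φ hφ => hmem φ (List.mem_cons_of_mem _ hφ)

lemma not_gtSel_of_simSel {S : Set (Rule U)} {K J : Set U} (h : simSel S K J) :
    ¬ gtSel S K J := by
  rintro ⟨r', hr', hlt, -⟩
  exact hlt.ne (h r' hr')

lemma gtSel_of_simSel_of_gtSel {S : Set (Rule U)} {K I J : Set U} (hKI : simSel S K I)
    (hKJ : gtSel S K J) : gtSel S I J := by
  obtain ⟨r', hr', hlt, hle, heq⟩ := hKJ
  exact ⟨r', hr', hKI r' hr' ▸ hlt, fun r hr hrk => hKI r hr ▸ hle r hr hrk,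
    fun r hr hrk => hKI r hr ▸ heq r hr hrk⟩

/-- No rank lies below 1, so a rank-1 rule `u` constrains every witness of `>`. -/
lemma gtSel_union_singleton_iff {S : Set (Rule U)} {u : Rule U} {K J : Set U}
    (hu : u.rank = 1) (hJ : degree J u = 1) :
    gtSel (S ∪ {u}) K J ↔ degree K u = 1 ∧ gtSel S K J := by
  have hK := one_le_degree K u
  constructor
  · rintro ⟨r', hr', hlt, hle, heq⟩
    rcases hr' with hr' | rfl
    · refine ⟨?_, r', hr', hlt, fun r hr => hle r (.inl hr), fun r hr => heq r (.inl hr)⟩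
      rcases (r'.rank_pos).eq_or_lt with hrk | hrk
      · exact le_antisymm (hJ ▸ hle u (.inr rfl) (hu.trans hrk)) hK
      · exact hJ ▸ heq u (.inr rfl) (hu.trans_lt hrk)
    · omega
  · rintro ⟨hKu, r', hr', hlt, hle, heq⟩
    refine ⟨r', .inl hr', hlt, ?_, ?_⟩ <;> rintro r (hr | rfl) hrk
    exacts [hle r hr hrk, (hKu.trans hJ.symm).le, heq r hr hrk, hKu.trans hJ.symm]

def pinRule (χ : Formula U) : Rule U := ⟨[χ, top], top, 1, by simp, le_rfl⟩

lemma degree_pinRule_eq_one_iff {K : Set U} {χ : Formula U} :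
    degree K (pinRule χ) = 1 ↔ Sat K χ := by
  simp [degree_eq_one_iff, pinRule]

def pinProblem (χ : Formula U) : OptProblem U := ⟨∅, {pinRule χ}, Set.finite_singleton _⟩

lemma models_union (T₁ T₂ : Set (Formula U)) : models (T₁ ∪ T₂) = models T₁ ∩ models T₂ := by
  ext I
  simp only [models, SatTheory, Set.mem_ofPred_eq, Set.mem_inter_iff, Set.mem_union,
    or_imp, forall_and]

lemma mem_pref_union_pinProblem_iff {P : OptProblem U} {χ : Formula U} {J : Set U}
    (hJ : Sat J χ) : J ∈ pref Sem.co (P.union (pinProblem χ)) ↔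
      J ∈ models P.gen ∧ ∀ K ∈ models P.gen, Sat K χ → ¬ gtSel P.sel K J := by
  have hout : outcomes Sem.co (P.union (pinProblem χ)) = models P.gen := by
    simp [outcomes, OptProblem.union, pinProblem]
  have hgt (K : Set U) : gtSel (P.union (pinProblem χ)).sel K J ↔ Sat K χ ∧ gtSel P.sel K J := by
    rw [← degree_pinRule_eq_one_iff]
    exact gtSel_union_singleton_iff rfl (degree_pinRule_eq_one_iff.mpr hJ)
  simp only [pref, Set.mem_ofPred_eq, hout, hgt]
  aesop

section StrongSelEquivalence

variable {i : ℕ} {j : ℕ∞} {P Q : OptProblem U}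

lemma seqv_symm {sem : Sem} (h : seqv sem i j P Q) : seqv sem i j Q P :=
  fun R hgen hrank => (h R hgen hrank).symm

lemma pref_union_pinProblem_eq (hj : 1 ≤ j) (h : seqv Sem.co 1 j P Q) (χ : Formula U) :
    pref Sem.co (P.union (pinProblem χ)) = pref Sem.co (Q.union (pinProblem χ)) :=
  h _ rfl fun r hr => by
    obtain rfl : r = pinRule χ := hr
    exact ⟨le_rfl, by simpa [pinRule] using hj⟩

lemma models_subset_of_seqv (hj : 1 ≤ j) (h : seqv Sem.co 1 j P Q) :
    models P.gen ⊆ models Q.gen := by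
  intro I hI
  obtain ⟨χ, hIχ, hχ⟩ := exists_formula_forall_simSel P.sel_finite I
  have hpref : I ∈ pref Sem.co (P.union (pinProblem χ)) :=
    (mem_pref_union_pinProblem_iff hIχ).mpr
      ⟨hI, fun K _ hKχ => not_gtSel_of_simSel (hχ K hKχ)⟩
  rw [pref_union_pinProblem_eq hj h] at hpref
  exact ((mem_pref_union_pinProblem_iff hIχ).mp hpref).1

lemma models_eq_of_seqv (hj : 1 ≤ j) (h : seqv Sem.co 1 j P Q) : models P.gen = models Q.gen :=
  (models_subset_of_seqv hj h).antisymm (models_subset_of_seqv hj (seqv_symm h))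

lemma gtSel_of_seqv (hj : 1 ≤ j) (h : seqv Sem.co 1 j P Q) {I J : Set U}
    (hI : I ∈ models P.gen) (hJ : J ∈ models P.gen) (hIJ : gtSel P.sel I J) :
    gtSel Q.sel I J := by
  obtain ⟨χI, hIχI, hχI⟩ := exists_formula_forall_simSel Q.sel_finite I
  obtain ⟨χJ, hJχJ, hχJ⟩ := exists_formula_forall_simSel Q.sel_finite J
  have hJχ : Sat J (.disj χI χJ) := .inr hJχJ
  have hnotP : J ∉ pref Sem.co (P.union (pinProblem (.disj χI χJ))) := fun hpref =>
    ((mem_pref_union_pinProblem_iff hJχ).mp hpref).2 I hI (.inl hIχI) hIJ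
  rw [pref_union_pinProblem_eq hj h, mem_pref_union_pinProblem_iff hJχ] at hnotP
  push Not at hnotP
  obtain ⟨K, -, hKχ | hKχ, hKJ⟩ := hnotP (models_eq_of_seqv hj h ▸ hJ)
  · exact gtSel_of_simSel_of_gtSel (hχI K hKχ) hKJ
  · exact absurd hKJ (not_gtSel_of_simSel (hχJ K hKχ))

end StrongSelEquivalence

lemma pref_co_congr {P Q : OptProblem U} (hmod : models P.gen = models Q.gen)
    (hgt : ∀ I ∈ models P.gen, ∀ J ∈ models P.gen, gtSel P.sel I J ↔ gtSel Q.sel I J) :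
    pref Sem.co P = pref Sem.co Q := by
  ext I
  simp only [pref, outcomes, ← hmod, Set.mem_ofPred_eq]
  exact and_congr_right fun hI =>
    not_congr (exists_congr fun J => and_congr_right fun hJ => hgt J hJ I hI)

theorem stmt10_general {U : Type} (P Q : OptProblem U)
    (h : seqv Sem.co 1 ⊤ P Q) : geqv Sem.co P Q := by
  intro R hR
  have hmod := models_eq_of_seqv le_top h
  refine pref_co_congr (by simp only [OptProblem.union, models_union, hmod]) ?_
  simp only [OptProblem.union, models_union, hR, Set.union_empty]
  rintro I ⟨hI, -⟩ J ⟨hJ, -⟩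
  exact ⟨gtSel_of_seqv le_top h hI hJ,
    gtSel_of_seqv le_top (seqv_symm h) (hmod ▸ hI) (hmod ▸ hJ)⟩

/-- Corollary 10: for CO problems, `P ≡^s Q` implies `P ≡_g Q`. -/
theorem stmt10 {U : Type} [Countable U] (P Q : OptProblem U)
    (h : seqv Sem.co 1 ⊤ P Q) : geqv Sem.co P Q :=
  stmt10_general P Q h
end

section
/- For all ranked ASO problems P and Q and every rank interval [i,j], P ≡^{s,[i,j]}_g Q if and only if: (1) HT(P^g) = HT(Q^g); (2) (>^P)_{Mod(P^g)} = (>^Q)_{Mod(Q^g)}; (3) for every I, J ∈ Mod(P^g) such that i < diff^P(I,J) or i < diff^Q(I,J), either diff^P(I,J) = diff^Q(I,J), or both diff^P(I,J) > j and diff^Q(I,J) > j; and (4) (>^{P_{<i}})_{Mod(P^g)} = (>^{Q_{<i}})_{Mod(Q^g)}. -/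
open scoped Classical

variable {U : Type}

section Part1
variable {U : Type}

/-! ### Basic HT lemmas -/

lemma satHT_sat {I J : Set U} (hIJ : I ⊆ J) : ∀ {φ : Formula U}, SatHT I J φ → Sat J φ
  | .atom a, h => hIJ h
  | .bot, h => h
  | .conj φ ψ, h => ⟨satHT_sat hIJ h.1, satHT_sat hIJ h.2⟩
  | .disj φ ψ, h => h.elim (fun h => Or.inl (satHT_sat hIJ h)) (fun h => Or.inr (satHT_sat hIJ h))
  | .imp φ ψ, h => h.1

lemma satHT_self {I : Set U} : ∀ {φ : Formula U}, SatHT I I φ ↔ Sat I φ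
  | .atom a => Iff.rfl
  | .bot => Iff.rfl
  | .conj φ ψ => by simp only [SatHT, Sat, satHT_self]
  | .disj φ ψ => by simp only [SatHT, Sat, satHT_self]
  | .imp φ ψ => by
      simp only [SatHT, Sat, satHT_self]
      tauto

lemma satHTTheory_self {I : Set U} {T : Set (Formula U)} :
    SatHTTheory I I T ↔ SatTheory I T := by
  unfold SatHTTheory SatTheory; simp only [satHT_self]

lemma mem_models_iff_HT {T : Set (Formula U)} {J : Set U} :
    J ∈ models T ↔ (J, J) ∈ HTmod T := by
  simp [models, HTmod, satHTTheory_self, Set.mem_setOf_eq, subset_refl, true_and]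

lemma satHTTheory_union {I J : Set U} {T T' : Set (Formula U)} :
    SatHTTheory I J (T ∪ T') ↔ SatHTTheory I J T ∧ SatHTTheory I J T' := by
  constructor
  · intro h; exact ⟨fun φ hφ => h φ (Or.inl hφ), fun φ hφ => h φ (Or.inr hφ)⟩
  · rintro ⟨h1, h2⟩ φ (hφ | hφ); exacts [h1 φ hφ, h2 φ hφ]

lemma satTheory_union {I : Set U} {T T' : Set (Formula U)} :
    SatTheory I (T ∪ T') ↔ SatTheory I T ∧ SatTheory I T' := by
  constructor
  · intro h; exact ⟨fun φ hφ => h φ (Or.inl hφ), fun φ hφ => h φ (Or.inr hφ)⟩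
  · rintro ⟨h1, h2⟩ φ (hφ | hφ); exacts [h1 φ hφ, h2 φ hφ]

lemma satHTTheory_iff_of_HTeq {T T' : Set (Formula U)} (h : HTmod T = HTmod T')
    {I J : Set U} (hIJ : I ⊆ J) : SatHTTheory I J T ↔ SatHTTheory I J T' := by
  constructor
  · intro hT
    have : (I, J) ∈ HTmod T := ⟨hIJ, hT⟩
    rw [h] at this; exact this.2
  · intro hT
    have : (I, J) ∈ HTmod T' := ⟨hIJ, hT⟩
    rw [← h] at this; exact this.2

lemma AS_union_eq_of_HTeq {T T' : Set (Formula U)} (h : HTmod T = HTmod T')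
    (R : Set (Formula U)) : AS (T ∪ R) = AS (T' ∪ R) := by
  ext I
  simp only [AS, Set.mem_setOf_eq, satHTTheory_union]
  constructor
  · rintro ⟨⟨h1, h2⟩, h3⟩
    refine ⟨⟨(satHTTheory_iff_of_HTeq h subset_rfl).1 h1, h2⟩, ?_⟩
    intro J hJ hc
    exact h3 J hJ ⟨(satHTTheory_iff_of_HTeq h hJ.1).2 hc.1, hc.2⟩
  · rintro ⟨⟨h1, h2⟩, h3⟩
    refine ⟨⟨(satHTTheory_iff_of_HTeq h subset_rfl).2 h1, h2⟩, ?_⟩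
    intro J hJ hc
    exact h3 J hJ ⟨(satHTTheory_iff_of_HTeq h hJ.1).1 hc.1, hc.2⟩

lemma models_eq_of_HTeq {T T' : Set (Formula U)} (h : HTmod T = HTmod T') :
    models T = models T' := by
  ext J; rw [mem_models_iff_HT, mem_models_iff_HT, h]

lemma AS_subset_models {T : Set (Formula U)} : AS T ⊆ models T := by
  intro I hI; exact satHTTheory_self.1 hI.1

end Part1
section Part2
variable {U : Type}

/-! ### Minimal differing rank -/

/-- Ranks at which some rule of `S` has different degrees in `I` and `J`. -/
def Dset (S : Set (Rule U)) (I J : Set U) : Set ℕ :=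
  {n | ∃ r ∈ S, r.rank = n ∧ degree I r ≠ degree J r}

/-- The minimal rank at which `S` distinguishes `I` and `J` (`⊤` if none). -/
noncomputable def dmin (S : Set (Rule U)) (I J : Set U) : ℕ∞ :=
  if (Dset S I J).Nonempty then ((sInf (Dset S I J) : ℕ) : ℕ∞) else ⊤

lemma Dset_comm (S : Set (Rule U)) (I J : Set U) : Dset S I J = Dset S J I := by
  ext n; unfold Dset; constructor <;> (rintro ⟨r, h1, h2, h3⟩; exact ⟨r, h1, h2, h3.symm⟩)

lemma dmin_comm (S : Set (Rule U)) (I J : Set U) : dmin S I J = dmin S J I := by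
  unfold dmin; rw [Dset_comm]

lemma dmin_eq_top_iff {S : Set (Rule U)} {I J : Set U} :
    dmin S I J = ⊤ ↔ simSel S I J := by
  unfold dmin
  split_ifs with h
  · simp only [ENat.coe_ne_top, false_iff]
    obtain ⟨n, r, hr, _, hne⟩ := h
    intro hs; exact hne (hs r hr)
  · simp only [eq_self_iff_true, true_iff]
    intro r hr
    by_contra hne
    exact h ⟨r.rank, r, hr, rfl, hne⟩

lemma dmin_eq_coe_iff {S : Set (Rule U)} {I J : Set U} {n : ℕ} :
    dmin S I J = (n : ℕ∞) ↔ (Dset S I J).Nonempty ∧ sInf (Dset S I J) = n := by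
  unfold dmin
  split_ifs with h
  · simp [h, Nat.cast_inj]
  · simp [h]

/-- Rules of rank below `dmin` have equal degrees. -/
lemma degree_eq_of_rank_lt_dmin {S : Set (Rule U)} {I J : Set U} {r : Rule U}
    (hr : r ∈ S) (h : (r.rank : ℕ∞) < dmin S I J) : degree I r = degree J r := by
  by_contra hne
  have hmem : r.rank ∈ Dset S I J := ⟨r, hr, rfl, hne⟩
  unfold dmin at h
  rw [if_pos ⟨_, hmem⟩] at h
  exact absurd (Nat.sInf_le hmem) (not_le.2 (by exact_mod_cast h))

lemma Dset_union (S S' : Set (Rule U)) (I J : Set U) :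
    Dset (S ∪ S') I J = Dset S I J ∪ Dset S' I J := by
  ext n
  constructor
  · rintro ⟨r, (h | h), h2, h3⟩
    exacts [Or.inl ⟨r, h, h2, h3⟩, Or.inr ⟨r, h, h2, h3⟩]
  · rintro (⟨r, h, h2, h3⟩ | ⟨r, h, h2, h3⟩)
    exacts [⟨r, Or.inl h, h2, h3⟩, ⟨r, Or.inr h, h2, h3⟩]

lemma dmin_union (S S' : Set (Rule U)) (I J : Set U) :
    dmin (S ∪ S') I J = min (dmin S I J) (dmin S' I J) := by
  unfold dmin
  rw [Dset_union]
  rcases Set.eq_empty_or_nonempty (Dset S I J) with h1 | h1 <;>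
    rcases Set.eq_empty_or_nonempty (Dset S' I J) with h2 | h2
  · simp [h1, h2]
  · simp only [h1, Set.empty_union, if_pos h2, if_neg (Set.not_nonempty_empty), min_comm]
    simp [min_def]
  · simp only [h2, Set.union_empty, if_pos h1, if_neg (Set.not_nonempty_empty)]
    simp [min_def]
  · rw [if_pos (h1.mono Set.subset_union_left), if_pos h1, if_pos h2]
    have : sInf (Dset S I J ∪ Dset S' I J) = min (sInf (Dset S I J)) (sInf (Dset S' I J)) := by
      apply le_antisymm
      · rcases min_cases (sInf (Dset S I J)) (sInf (Dset S' I J)) with ⟨he, _⟩ | ⟨he, _⟩ <;>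
          rw [he]
        · exact Nat.sInf_le (Set.mem_union_left _ (Nat.sInf_mem h1))
        · exact Nat.sInf_le (Set.mem_union_right _ (Nat.sInf_mem h2))
      · apply le_csInf (h1.mono Set.subset_union_left)
        rintro n (hn | hn)
        · exact le_trans (min_le_left _ _) (Nat.sInf_le hn)
        · exact le_trans (min_le_right _ _) (Nat.sInf_le hn)
    rw [this]
    rcases le_total (sInf (Dset S I J)) (sInf (Dset S' I J)) with hle | hle
    · rw [min_eq_left hle, min_eq_left (by exact_mod_cast hle : ((sInf (Dset S I J) : ℕ) : ℕ∞) ≤ _)]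
    · rw [min_eq_right hle, min_eq_right (by exact_mod_cast hle : ((sInf (Dset S' I J) : ℕ) : ℕ∞) ≤ _)]

/-- Canonical form of the strict preference. -/
lemma gtSel_iff {S : Set (Rule U)} {I J : Set U} :
    gtSel S I J ↔ ∃ n : ℕ, dmin S I J = (n : ℕ∞) ∧
      ∀ r ∈ S, r.rank = n → degree I r ≤ degree J r := by
  constructor
  · rintro ⟨r', hr', hlt, hsame, hlow⟩
    refine ⟨r'.rank, ?_, ?_⟩
    · rw [dmin_eq_coe_iff]
      have hmem : r'.rank ∈ Dset S I J := ⟨r', hr', rfl, Nat.ne_of_lt hlt⟩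
      refine ⟨⟨_, hmem⟩, le_antisymm (Nat.sInf_le hmem) ?_⟩
      apply le_csInf ⟨_, hmem⟩
      rintro m ⟨r, hr, hrank, hne⟩
      by_contra hlt'
      push_neg at hlt'
      exact hne (hlow r hr (hrank ▸ hlt'))
    · exact fun r hr hrank => hsame r hr hrank
  · rintro ⟨n, hd, hle⟩
    rw [dmin_eq_coe_iff] at hd
    obtain ⟨hne, hinf⟩ := hd
    obtain ⟨r', hr', hrank, hdne⟩ := hinf ▸ Nat.sInf_mem hne
    refine ⟨r', hr', lt_of_le_of_ne (hle r' hr' hrank) hdne, ?_, ?_⟩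
    · intro r hr h; exact hle r hr (h.trans hrank)
    · intro r hr hlt
      by_contra hne2
      have : r.rank ∈ Dset S I J := ⟨r, hr, rfl, hne2⟩
      have := hinf ▸ Nat.sInf_le this
      omega

lemma gtSel_irrefl {S : Set (Rule U)} {I : Set U} : ¬ gtSel S I I := by
  rintro ⟨r, _, h, _⟩; exact lt_irrefl _ h

/-- `diff` equals `dmin` of the selector. -/
lemma diff_eq_dmin (P : OptProblem U) (I J : Set U) : diff P I J = dmin P.sel I J := by
  unfold diff dmin
  have hsim : ∀ k : ℕ, simSel (P.below k).sel I J ↔ ∀ n ∈ Dset P.sel I J, k ≤ n := by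
    intro k
    constructor
    · intro h n hn
      by_contra hlt
      push_neg at hlt
      obtain ⟨r, hr, hrank, hne⟩ := hn
      exact hne (h r ⟨hr, hrank ▸ hlt⟩)
    · intro h r hr
      by_contra hne
      exact absurd (h r.rank ⟨r, hr.1, rfl, hne⟩) (not_le.2 hr.2)
  split_ifs with h1 h2 h3
  · exfalso
    obtain ⟨n, hn⟩ := h2
    obtain ⟨r, hr, hrank, hne⟩ := hn
    exact hne (h1 (r.rank + 1) r ⟨hr, by omega⟩)
  · rfl
  · congr 1
    have heq : {k : ℕ | simSel (P.below k).sel I J} = Set.Iic (sInf (Dset P.sel I J)) := by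
      ext k
      rw [Set.mem_setOf_eq, Set.mem_Iic, hsim k]
      exact ⟨fun h => le_csInf h3 h, fun h n hn => h.trans (Nat.sInf_le hn)⟩
    rw [heq, csSup_Iic]
  · exfalso
    push_neg at h1
    obtain ⟨k, hk⟩ := h1
    refine hk ((hsim k).2 fun n hn => ?_)
    rw [Set.not_nonempty_iff_eq_empty.1 h3] at hn
    exact absurd hn (Set.notMem_empty n)

end Part2
section Part3
variable {U : Type}

lemma dmin_spec {S : Set (Rule U)} {I J : Set U} {n : ℕ} (h : dmin S I J = (n : ℕ∞)) :
    ∃ r ∈ S, r.rank = n ∧ degree I r ≠ degree J r := by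
  rw [dmin_eq_coe_iff] at h
  exact h.2 ▸ Nat.sInf_mem h.1

/-- All rules of rank `n` in `S` weakly prefer `I` over `J`. -/
def Lok (S : Set (Rule U)) (n : ℕ) (I J : Set U) : Prop :=
  ∀ r ∈ S, r.rank = n → degree I r ≤ degree J r

lemma Lok_of_lt {S : Set (Rule U)} {I J : Set U} {n : ℕ}
    (h : (n : ℕ∞) < dmin S I J) : Lok S n I J :=
  fun r hr hrank => le_of_eq (degree_eq_of_rank_lt_dmin hr (by rw [hrank]; exact h))

lemma gtSel_iff' {S : Set (Rule U)} {I J : Set U} :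
    gtSel S I J ↔ ∃ n : ℕ, dmin S I J = (n : ℕ∞) ∧ Lok S n I J := gtSel_iff

lemma gtSel_union_iff {S S' : Set (Rule U)} {I J : Set U} :
    gtSel (S ∪ S') I J ↔ ∃ n : ℕ, min (dmin S I J) (dmin S' I J) = (n : ℕ∞) ∧
      Lok S n I J ∧ Lok S' n I J := by
  rw [gtSel_iff']
  constructor
  · rintro ⟨n, hd, hL⟩
    rw [dmin_union] at hd
    exact ⟨n, hd, fun r hr => hL r (Or.inl hr), fun r hr => hL r (Or.inr hr)⟩
  · rintro ⟨n, hd, hL, hL'⟩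
    refine ⟨n, by rw [dmin_union]; exact hd, ?_⟩
    rintro r (hr | hr); exacts [hL r hr, hL' r hr]

lemma Dset_below {P : OptProblem U} {i : ℕ} {I J : Set U} :
    Dset (P.below i).sel I J = {n ∈ Dset P.sel I J | n < i} := by
  ext n
  constructor
  · rintro ⟨r, ⟨hr, hri⟩, hrank, hne⟩
    exact ⟨⟨r, hr, hrank, hne⟩, hrank ▸ hri⟩
  · rintro ⟨⟨r, hr, hrank, hne⟩, hni⟩
    exact ⟨r, ⟨hr, hrank ▸ hni⟩, hrank, hne⟩

lemma gtSel_below_iff {P : OptProblem U} {i : ℕ} {I J : Set U} :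
    gtSel (P.below i).sel I J ↔ dmin P.sel I J < (i : ℕ∞) ∧ gtSel P.sel I J := by
  constructor
  · intro h
    rw [gtSel_iff'] at h
    obtain ⟨n, hd, hL⟩ := h
    obtain ⟨r, hr, hrank, hne⟩ := dmin_spec hd
    have hri : n < i := hrank ▸ hr.2
    have hnD : n ∈ Dset P.sel I J := ⟨r, hr.1, hrank, hne⟩
    have hDne : (Dset P.sel I J).Nonempty := ⟨n, hnD⟩
    have hinf : sInf (Dset P.sel I J) = n := by
      refine le_antisymm (Nat.sInf_le hnD) ?_
      apply le_csInf hDne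
      intro k hk
      by_contra hkn
      push_neg at hkn
      obtain ⟨rk, hrk, hrkrank, hrkne⟩ := hk
      have hkmem : k ∈ Dset (P.below i).sel I J :=
        ⟨rk, ⟨hrk, by omega⟩, hrkrank, hrkne⟩
      have := (dmin_eq_coe_iff.1 hd).2 ▸ Nat.sInf_le hkmem
      omega
    have hdP : dmin P.sel I J = (n : ℕ∞) := dmin_eq_coe_iff.2 ⟨hDne, hinf⟩
    refine ⟨by rw [hdP]; exact_mod_cast hri, ?_⟩
    rw [gtSel_iff']
    exact ⟨n, hdP, fun r' hr' hrank' => hL r' ⟨hr', hrank' ▸ hri⟩ hrank'⟩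
  · rintro ⟨hlt, h⟩
    rw [gtSel_iff'] at h ⊢
    obtain ⟨n, hd, hL⟩ := h
    have hni : n < i := by rw [hd] at hlt; exact_mod_cast hlt
    obtain ⟨r, hr, hrank, hne⟩ := dmin_spec hd
    refine ⟨n, ?_, fun r' hr' hrank' => hL r' hr'.1 hrank'⟩
    rw [dmin_eq_coe_iff]
    have hnD : n ∈ Dset (P.below i).sel I J := ⟨r, ⟨hr, hrank ▸ hni⟩, hrank, hne⟩
    refine ⟨⟨n, hnD⟩, le_antisymm (Nat.sInf_le hnD) ?_⟩
    apply le_csInf ⟨n, hnD⟩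
    intro k hk
    rw [Dset_below] at hk
    have := (dmin_eq_coe_iff.1 hd).2 ▸ Nat.sInf_le hk.1
    omega

/-- One direction of the key combinatorial transfer lemma. -/
lemma key_mp {P Q : OptProblem U} {i : ℕ} {j : ℕ∞} (hij : (i : ℕ∞) ≤ j)
    {SR : Set (Rule U)} (hR : ∀ r ∈ SR, i ≤ r.rank ∧ (r.rank : ℕ∞) ≤ j)
    {I J : Set U}
    (h2 : gtSel P.sel I J ↔ gtSel Q.sel I J)
    (h4 : gtSel (P.below i).sel I J ↔ gtSel (Q.below i).sel I J)
    (h3 : ((i : ℕ∞) < dmin P.sel I J ∨ (i : ℕ∞) < dmin Q.sel I J) →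
      dmin P.sel I J = dmin Q.sel I J ∨ (j < dmin P.sel I J ∧ j < dmin Q.sel I J))
    (hyp : gtSel (P.sel ∪ SR) I J) : gtSel (Q.sel ∪ SR) I J := by
  rw [gtSel_union_iff] at hyp ⊢
  obtain ⟨n, hmin, hLP, hLR⟩ := hyp
  rcases eq_or_ne (dmin SR I J) ⊤ with hRtop | hRtop
  · -- SR does not distinguish I and J
    rw [hRtop, min_eq_left le_top] at hmin
    have hgtP : gtSel P.sel I J := gtSel_iff'.2 ⟨n, hmin, hLP⟩
    obtain ⟨m, hdQ, hLQ⟩ := gtSel_iff'.1 (h2.1 hgtP)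
    exact ⟨m, by rw [hRtop, min_eq_left le_top]; exact hdQ,
      hLQ, Lok_of_lt (by rw [hRtop]; exact lt_top_iff_ne_top.2 (ENat.coe_ne_top m))⟩
  · obtain ⟨nR, hdR⟩ : ∃ nR : ℕ, dmin SR I J = (nR : ℕ∞) := by
      cases h : dmin SR I J with
      | top => exact absurd h hRtop
      | coe m => exact ⟨m, rfl⟩
    obtain ⟨rR, hrR, hrRrank, _⟩ := dmin_spec hdR
    obtain ⟨hinR, hjnR⟩ := hR rR hrR
    rw [hrRrank] at hinR hjnR
    -- i ≤ nR and nR ≤ j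
    rcases lt_trichotomy (dmin P.sel I J) ((nR : ℕ∞)) with hPR | hPR | hPR
    · -- dP < nR : the minimum is dP; P strictly wins
      have hdP : dmin P.sel I J = (n : ℕ∞) := by
        rw [hdR, min_eq_left hPR.le] at hmin; exact hmin
      have hnnR : n < nR := by rw [hdP] at hPR; exact_mod_cast hPR
      have hgtP : gtSel P.sel I J := gtSel_iff'.2 ⟨n, hdP, hLP⟩
      obtain ⟨m, hdQ, hLQ⟩ := gtSel_iff'.1 (h2.1 hgtP)
      by_cases hmnR : m < nR
      · exact ⟨m, by
          rw [hdQ, hdR, min_eq_left (by exact_mod_cast hmnR.le)], hLQ,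
          Lok_of_lt (by rw [hdR]; exact_mod_cast hmnR)⟩
      · -- m ≥ nR : contradiction
        exfalso
        push_neg at hmnR
        have hPQne : dmin P.sel I J ≠ dmin Q.sel I J := by
          rw [hdP, hdQ]; exact_mod_cast (by omega : n ≠ m)
        rcases (em (((i : ℕ∞) < dmin P.sel I J ∨ (i : ℕ∞) < dmin Q.sel I J))) with hprem | hprem
        · rcases h3 hprem with heq | ⟨hjP, _⟩
          · exact hPQne heq
          · rw [hdP] at hjP
            have hle : (n : ℕ∞) ≤ j := le_trans (by exact_mod_cast hnnR.le) hjnR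
            exact hjP.not_ge hle
        · push_neg at hprem
          obtain ⟨hiP, hiQ⟩ := hprem
          have hdPi : dmin P.sel I J < (i : ℕ∞) := by
            rw [hdP] at hiP ⊢
            rw [hdQ] at hiQ
            -- dQ = m ≥ nR ≥ i and dQ ≤ i forces m = i = nR ; then n < nR = i
            have him : m ≤ i := by exact_mod_cast hiQ
            have : m = i := le_antisymm him (hinR.trans hmnR)
            exact_mod_cast (by omega : n < i)
          have hgtPb : gtSel (P.below i).sel I J := gtSel_below_iff.2 ⟨hdPi, hgtP⟩
          have := gtSel_below_iff.1 (h4.1 hgtPb)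
          rw [hdQ] at this
          have him : m < i := by exact_mod_cast this.1
          omega
    · -- dP = nR
      have hdP : dmin P.sel I J = (n : ℕ∞) := by
        rw [hdR, hPR, min_self] at hmin; rw [hPR]; exact hmin
      have hnnR : n = nR := by
        rw [hdP] at hPR; exact_mod_cast hPR
      have hgtP : gtSel P.sel I J := gtSel_iff'.2 ⟨n, hdP, hLP⟩
      obtain ⟨m, hdQ, hLQ⟩ := gtSel_iff'.1 (h2.1 hgtP)
      by_cases hmnR : m = nR
      · exact ⟨m, by rw [hdQ, hdR, hmnR, min_self], hLQ, by rw [hmnR, ← hnnR]; exact hLR⟩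
      · exfalso
        have hPQne : dmin P.sel I J ≠ dmin Q.sel I J := by
          rw [hdP, hdQ]; exact_mod_cast (by omega : n ≠ m)
        rcases (em (((i : ℕ∞) < dmin P.sel I J ∨ (i : ℕ∞) < dmin Q.sel I J))) with hprem | hprem
        · rcases h3 hprem with heq | ⟨hjP, _⟩
          · exact hPQne heq
          · rw [hdP] at hjP
            have : (n : ℕ∞) ≤ j := by rw [hnnR]; exact hjnR
            exact hjP.not_ge this
        · push_neg at hprem
          obtain ⟨hiP, hiQ⟩ := hprem
          rw [hdP] at hiP
          have hni : n ≤ i := by exact_mod_cast hiP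
          have hnR_eq_i : n = i := le_antisymm hni (hnnR ▸ hinR)
          rw [hdQ] at hiQ
          have hmi : m ≤ i := by exact_mod_cast hiQ
          have hmi' : m < i := by omega
          have hgtQb : gtSel (Q.below i).sel I J :=
            gtSel_below_iff.2 ⟨by rw [hdQ]; exact_mod_cast hmi', gtSel_iff'.2 ⟨m, hdQ, hLQ⟩⟩
          have := gtSel_below_iff.1 (h4.2 hgtQb)
          rw [hdP] at this
          have : n < i := by exact_mod_cast this.1
          omega
    · -- dP > nR : minimum is nR ; SR wins
      have hn_eq : n = nR := by
        rw [hdR, min_eq_right hPR.le] at hmin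
        exact_mod_cast hmin.symm
      rcases lt_trichotomy (dmin Q.sel I J) ((nR : ℕ∞)) with hQR | hQR | hQR
      · -- dQ < nR : contradiction via (3)
        exfalso
        have hPQne : dmin P.sel I J ≠ dmin Q.sel I J := fun h => by
          rw [h] at hPR; exact absurd hPR (not_lt.2 hQR.le)
        have hiP : (i : ℕ∞) < dmin P.sel I J :=
          lt_of_le_of_lt (by exact_mod_cast hinR) hPR
        rcases h3 (Or.inl hiP) with heq | ⟨_, hjQ⟩
        · exact hPQne heq
        · exact absurd (hQR.trans_le hjnR) (not_lt.2 hjQ.le)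
      · -- dQ = nR : contradiction via (3)
        exfalso
        have hPQne : dmin P.sel I J ≠ dmin Q.sel I J := fun h => by
          rw [h, hQR] at hPR; exact lt_irrefl _ hPR
        have hiP : (i : ℕ∞) < dmin P.sel I J :=
          lt_of_le_of_lt (by exact_mod_cast hinR) hPR
        rcases h3 (Or.inl hiP) with heq | ⟨_, hjQ⟩
        · exact hPQne heq
        · rw [hQR] at hjQ; exact hjQ.not_ge hjnR
      · -- dQ > nR
        exact ⟨nR, by rw [hdR, min_eq_right hQR.le], hn_eq ▸ Lok_of_lt (hn_eq ▸ hQR),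
          hn_eq ▸ hLR⟩

end Part3
section Part4
variable {U : Type}

lemma restrictRel_iff {rel rel' : Set U → Set U → Prop} {V W : Set (Set U)}
    (h : restrictRel rel V = restrictRel rel' W) {A B : Set U}
    (hA : A ∈ V) (hB : B ∈ V) (hA' : A ∈ W) (hB' : B ∈ W) : rel A B ↔ rel' A B := by
  have := congrFun (congrFun h A) B
  unfold restrictRel at this
  constructor
  · intro hr
    exact (this ▸ (⟨hr, hA, hB⟩ : rel A B ∧ A ∈ V ∧ B ∈ V)).1
  · intro hr
    exact (this.symm ▸ (⟨hr, hA', hB'⟩ : rel' A B ∧ A ∈ W ∧ B ∈ W)).1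

lemma gtSel_asymm {S : Set (Rule U)} {A B : Set U} (h : gtSel S A B) : ¬ gtSel S B A := by
  intro h'
  obtain ⟨n, hd, hL⟩ := gtSel_iff'.1 h
  obtain ⟨m, hd', hL'⟩ := gtSel_iff'.1 h'
  rw [dmin_comm] at hd'
  rw [hd] at hd'
  have hnm : n = m := by exact_mod_cast hd'
  obtain ⟨r, hr, hrank, hne⟩ := dmin_spec hd
  exact hne (le_antisymm (hL r hr hrank) (hL' r hr (hnm ▸ hrank)))

/-- Backward direction of the main theorem. -/
lemma backward {P Q : OptProblem U} {i : ℕ} {j : ℕ∞} (hij : (i : ℕ∞) ≤ j)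
    (h1 : HTmod P.gen = HTmod Q.gen)
    (h2 : restrictRel (gtSel P.sel) (models P.gen) =
      restrictRel (gtSel Q.sel) (models Q.gen))
    (h3 : ∀ I ∈ models P.gen, ∀ J ∈ models P.gen,
      ((i : ℕ∞) < diff P I J ∨ (i : ℕ∞) < diff Q I J) →
        (diff P I J = diff Q I J ∨ (j < diff P I J ∧ j < diff Q I J)))
    (h4 : restrictRel (gtSel (P.below i).sel) (models P.gen) =
      restrictRel (gtSel (Q.below i).sel) (models Q.gen)) :
    sgeqv Sem.aso i j P Q := by
  intro R hR
  have hModEq : models P.gen = models Q.gen := models_eq_of_HTeq h1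
  have hAS : AS (P.gen ∪ R.gen) = AS (Q.gen ∪ R.gen) := AS_union_eq_of_HTeq h1 R.gen
  have hout : outcomes Sem.aso (P.union R) = outcomes Sem.aso (Q.union R) := hAS
  have hsub : outcomes Sem.aso (P.union R) ⊆ models P.gen := by
    intro A hA
    have := AS_subset_models hA
    exact fun φ hφ => this φ (Or.inl hφ)
  -- pointwise transfer
  have hkey : ∀ A ∈ models P.gen, ∀ B ∈ models P.gen,
      (gtSel (P.sel ∪ R.sel) A B ↔ gtSel (Q.sel ∪ R.sel) A B) := by
    intro A hA B hB
    have hA' : A ∈ models Q.gen := hModEq ▸ hA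
    have hB' : B ∈ models Q.gen := hModEq ▸ hB
    have e2 : gtSel P.sel A B ↔ gtSel Q.sel A B := restrictRel_iff h2 hA hB hA' hB'
    have e4 : gtSel (P.below i).sel A B ↔ gtSel (Q.below i).sel A B :=
      restrictRel_iff h4 hA hB hA' hB'
    have e3 := h3 A hA B hB
    rw [diff_eq_dmin, diff_eq_dmin] at e3
    have e3' : ((i : ℕ∞) < dmin Q.sel A B ∨ (i : ℕ∞) < dmin P.sel A B) →
        dmin Q.sel A B = dmin P.sel A B ∨ (j < dmin Q.sel A B ∧ j < dmin P.sel A B) := by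
      intro hp
      rcases e3 hp.symm with he | ⟨ha, hb⟩
      exacts [Or.inl he.symm, Or.inr ⟨hb, ha⟩]
    exact ⟨key_mp hij hR e2 e4 e3, key_mp hij hR e2.symm e4.symm e3'⟩
  ext K
  simp only [pref, Set.mem_setOf_eq, hout]
  constructor
  · rintro ⟨hK, hn⟩
    refine ⟨hK, ?_⟩
    rintro ⟨L, hL, hg⟩
    refine hn ⟨L, hL, ?_⟩
    exact (hkey L (hsub (hout ▸ hL)) K (hsub (hout ▸ hK))).2 hg
  · rintro ⟨hK, hn⟩
    refine ⟨hK, ?_⟩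
    rintro ⟨L, hL, hg⟩
    refine hn ⟨L, hL, ?_⟩
    exact (hkey L (hsub (hout ▸ hL)) K (hsub (hout ▸ hK))).1 hg

end Part4
section Part5
variable {U : Type}

/-! ### Formula toolkit -/

/-- Negation. -/
def fnot (φ : Formula U) : Formula U := .imp φ .bot

/-- A literal describing the status of `x` in `I`. -/
noncomputable def lit (I : Set U) (x : U) : Formula U :=
  if x ∈ I then .atom x else fnot (.atom x)

/-- Excluded middle formula. -/
def emF (x : U) : Formula U := .disj (.atom x) (fnot (.atom x))

/-- The excluded-middle theory. -/
def EMset : Set (Formula U) := Set.range emF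

/-- A tautology. -/
def topF : Formula U := fnot .bot

lemma sat_topF {I : Set U} : Sat I (topF : Formula U) := fun h => h

lemma sat_fnot {M : Set U} {φ : Formula U} : Sat M (fnot φ) ↔ ¬ Sat M φ := Iff.rfl

lemma satHT_fnot {K M : Set U} (hKM : K ⊆ M) {φ : Formula U} :
    SatHT K M (fnot φ) ↔ ¬ Sat M φ := by
  constructor
  · intro h; exact fun hs => h.1 hs
  · intro h
    exact ⟨fun hs => absurd hs h, Or.inl (fun hh => h (satHT_sat hKM hh))⟩

lemma satHT_fnot_fnot {K M : Set U} (hKM : K ⊆ M) {φ : Formula U} :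
    SatHT K M (fnot (fnot φ)) ↔ Sat M φ := by
  rw [satHT_fnot hKM, sat_fnot, not_not]

lemma sat_lit {M I : Set U} {x : U} : Sat M (lit I x) ↔ (x ∈ M ↔ x ∈ I) := by
  unfold lit
  split_ifs with h
  · simp [Sat, h]
  · rw [sat_fnot]
    simp only [Sat]
    constructor
    · intro hm; exact ⟨fun hx => absurd hx hm, fun hx => absurd hx h⟩
    · intro hiff hm; exact h (hiff.1 hm)

lemma sat_em {M : Set U} {x : U} : Sat M (emF x) := by
  by_cases h : x ∈ M
  · exact Or.inl h
  · exact Or.inr (fun hx => h hx)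

lemma satTheory_EMset {M : Set U} : SatTheory M (EMset : Set (Formula U)) := by
  rintro φ ⟨x, rfl⟩; exact sat_em

lemma satHT_EMset {K M : Set U} (hKM : K ⊆ M) :
    SatHTTheory K M (EMset : Set (Formula U)) ↔ K = M := by
  constructor
  · intro h
    refine Set.Subset.antisymm hKM (fun x hx => ?_)
    rcases h (emF x) ⟨x, rfl⟩ with h' | h'
    · exact h'
    · exact absurd hx ((satHT_fnot hKM).1 h')
  · rintro rfl φ ⟨x, rfl⟩
    exact satHT_self.2 sat_em

/-- If the theory contains EM, answer sets are exactly the classical models. -/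
lemma AS_eq_models_of_EM {T : Set (Formula U)} (hEM : EMset ⊆ T) : AS T = models T := by
  ext M
  constructor
  · intro hM; exact satHTTheory_self.1 hM.1
  · intro hM
    refine ⟨satHTTheory_self.2 hM, fun K hK hc => ?_⟩
    have : SatHTTheory K M EMset := fun φ hφ => hc φ (hEM hφ)
    exact hK.ne ((satHT_EMset hK.subset).1 this)

/-- The theory whose unique (classical and HT) model is `J`. -/
noncomputable def litTh (J : Set U) : Set (Formula U) := Set.range (lit J)

lemma satTheory_litTh {M J : Set U} : SatTheory M (litTh J) ↔ M = J := by
  constructor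
  · intro h
    ext x
    exact sat_lit.1 (h (lit J x) ⟨x, rfl⟩)
  · rintro rfl φ ⟨x, rfl⟩
    exact sat_lit.2 Iff.rfl

lemma satHT_litTh {K M J : Set U} (hKM : K ⊆ M) :
    SatHTTheory K M (litTh J) ↔ K = J ∧ M = J := by
  constructor
  · intro h
    have hJK : J ⊆ K := by
      intro x hx
      have := h (lit J x) ⟨x, rfl⟩
      unfold lit at this
      rw [if_pos hx] at this
      exact this
    have hMJ : M ⊆ J := by
      intro x hx
      by_contra hxJ
      have := h (lit J x) ⟨x, rfl⟩
      unfold lit at this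
      rw [if_neg hxJ] at this
      exact (satHT_fnot hKM).1 this hx
    have : K = J := Set.Subset.antisymm (hKM.trans hMJ) hJK
    exact ⟨this, Set.Subset.antisymm hMJ (hJK.trans hKM)⟩
  · rintro ⟨rfl, rfl⟩ φ ⟨x, rfl⟩
    unfold lit
    split_ifs with h
    · exact h
    · exact (satHT_fnot hKM).2 h

lemma AS_union_litTh {T : Set (Formula U)} {J M : Set U} :
    M ∈ AS (T ∪ litTh J) ↔ M = J ∧ SatTheory J T := by
  constructor
  · rintro ⟨hsat, _⟩
    rw [satHTTheory_union] at hsat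
    have hMJ : M = J := ((satHT_litTh subset_rfl).1 hsat.2).2
    subst hMJ
    exact ⟨rfl, satHTTheory_self.1 hsat.1⟩
  · rintro ⟨rfl, hT⟩
    refine ⟨satHTTheory_union.2 ⟨satHTTheory_self.2 hT,
      (satHT_litTh subset_rfl).2 ⟨rfl, rfl⟩⟩, ?_⟩
    intro K hK hc
    rw [satHTTheory_union] at hc
    exact hK.ne ((satHT_litTh hK.subset).1 hc.2).1

/-- If outcomes form a subsingleton, all outcomes are preferred. -/
lemma pref_of_subsingleton {Pb : OptProblem U}
    (h : ∀ A ∈ outcomes Sem.aso Pb, ∀ B ∈ outcomes Sem.aso Pb, A = B) :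
    pref Sem.aso Pb = outcomes Sem.aso Pb := by
  ext M
  simp only [pref, Set.mem_setOf_eq]
  refine ⟨fun hM => hM.1, fun hM => ⟨hM, ?_⟩⟩
  rintro ⟨K, hK, hg⟩
  exact gtSel_irrefl (h K hK M hM ▸ hg)

end Part5
section Part6
variable {U : Type}

/-- The context theory whose HT-models are exactly `⟨I,J⟩` and `⟨J,J⟩`. -/
def ctxIJ (I J : Set U) : Set (Formula U) :=
  (Formula.atom '' I) ∪ ((fun a => fnot (.atom a)) '' Jᶜ) ∪
    ((fun b => fnot (fnot (.atom b))) '' (J \ I)) ∪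
    {φ | ∃ b ∈ J \ I, ∃ c ∈ J \ I, φ = Formula.imp (.atom b) (.atom c)}

lemma satHT_ctxIJ {I J K M : Set U} (hIJ : I ⊆ J) (hKM : K ⊆ M) :
    SatHTTheory K M (ctxIJ I J) ↔ (M = J ∧ (K = I ∨ K = J)) := by
  constructor
  · intro h
    have hIK : I ⊆ K := by
      intro a ha
      exact h (.atom a) (Or.inl (Or.inl (Or.inl ⟨a, ha, rfl⟩)))
    have hMJ : M ⊆ J := by
      intro a ha
      by_contra haJ
      exact (satHT_fnot hKM).1 (h _ (Or.inl (Or.inl (Or.inr ⟨a, haJ, rfl⟩)))) ha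
    have hJM : J \ I ⊆ M := by
      intro b hb
      exact (satHT_fnot_fnot hKM).1 (h _ (Or.inl (Or.inr ⟨b, hb, rfl⟩)))
    have hM : M = J := by
      apply Set.Subset.antisymm hMJ
      intro x hx
      by_cases hxI : x ∈ I
      · exact hKM (hIK hxI)
      · exact hJM ⟨hx, hxI⟩
    refine ⟨hM, ?_⟩
    by_cases hKI : ∃ b ∈ J \ I, b ∈ K
    · right
      obtain ⟨b, hb, hbK⟩ := hKI
      apply Set.Subset.antisymm (hKM.trans hMJ)
      intro c hc
      by_cases hcI : c ∈ I
      · exact hIK hcI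
      · have := h _ (Or.inr ⟨b, hb, c, ⟨hc, hcI⟩, rfl⟩)
        rcases this.2 with h' | h'
        · exact absurd hbK h'
        · exact h'
    · left
      push_neg at hKI
      apply Set.Subset.antisymm _ hIK
      intro x hxK
      by_contra hxI
      have hxJ : x ∈ J := hM ▸ hKM hxK
      exact hKI x ⟨hxJ, hxI⟩ hxK
  · rintro ⟨rfl, hK⟩
    intro φ hφ
    rcases hφ with ((⟨a, ha, rfl⟩ | ⟨a, ha, rfl⟩) | ⟨b, hb, rfl⟩) | ⟨b, hb, c, hc, rfl⟩
    · rcases hK with rfl | rfl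
      exacts [ha, hIJ ha]
    · refine (satHT_fnot hKM).2 ha
    · exact (satHT_fnot_fnot hKM).2 hb.1
    · refine ⟨fun _ => hc.1, ?_⟩
      rcases hK with rfl | rfl
      · exact Or.inl (fun hbI => hb.2 hbI)
      · exact Or.inr hc.1
end Part6
section Part7
variable {U : Type}

lemma AS_union_ctxIJ {T : Set (Formula U)} {I J M : Set U} (hIJ : I ⊂ J) :
    M ∈ AS (T ∪ ctxIJ I J) ↔ M = J ∧ SatTheory J T ∧ ¬ SatHTTheory I J T := by
  constructor
  · rintro ⟨hsat, hmin⟩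
    rw [satHTTheory_union] at hsat
    obtain ⟨hMJ, -⟩ := (satHT_ctxIJ hIJ.subset subset_rfl).1 hsat.2
    subst hMJ
    refine ⟨rfl, satHTTheory_self.1 hsat.1, fun hc => ?_⟩
    exact hmin I hIJ (satHTTheory_union.2 ⟨hc,
      (satHT_ctxIJ hIJ.subset hIJ.subset).2 ⟨rfl, Or.inl rfl⟩⟩)
  · rintro ⟨rfl, hT, hnT⟩
    refine ⟨satHTTheory_union.2 ⟨satHTTheory_self.2 hT,
      (satHT_ctxIJ hIJ.subset subset_rfl).2 ⟨rfl, Or.inr rfl⟩⟩, ?_⟩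
    intro K hK hc
    rw [satHTTheory_union] at hc
    obtain ⟨-, hK'⟩ := (satHT_ctxIJ hIJ.subset hK.subset).1 hc.2
    rcases hK' with rfl | rfl
    · exact hnT hc.1
    · exact hK.ne rfl

lemma sgeqv_symm {sem : Sem} {i : ℕ} {j : ℕ∞} {P Q : OptProblem U}
    (h : sgeqv sem i j P Q) : sgeqv sem i j Q P :=
  fun R hR => (h R hR).symm

lemma emptyInterval {i : ℕ} {j : ℕ∞} : inRankInterval i j (∅ : Set (Rule U)) :=
  fun r hr => absurd hr (Set.notMem_empty r)

lemma forward_models {i : ℕ} {j : ℕ∞} {P Q : OptProblem U}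
    (hs : sgeqv Sem.aso i j P Q) : models P.gen = models Q.gen := by
  ext J
  have key : ∀ T : OptProblem U,
      (J ∈ pref Sem.aso (T.union ⟨litTh J, ∅, Set.finite_empty⟩) ↔ SatTheory J T.gen) := by
    intro T
    have hsub : ∀ A ∈ outcomes Sem.aso (T.union ⟨litTh J, ∅, Set.finite_empty⟩),
        ∀ B ∈ outcomes Sem.aso (T.union ⟨litTh J, ∅, Set.finite_empty⟩), A = B := by
      intro A hA B hB
      have hA' := AS_union_litTh.1 hA
      have hB' := AS_union_litTh.1 hB
      rw [hA'.1, hB'.1]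
    rw [pref_of_subsingleton hsub]
    show J ∈ AS (T.gen ∪ litTh J) ↔ _
    rw [AS_union_litTh]
    simp
  have h := hs ⟨litTh J, ∅, Set.finite_empty⟩ emptyInterval
  constructor
  · intro hJ
    exact (key Q).1 (h ▸ (key P).2 hJ)
  · intro hJ
    exact (key P).1 (h.symm ▸ (key Q).2 hJ)

lemma forward_HT_sub {i : ℕ} {j : ℕ∞} {P Q : OptProblem U}
    (hs : sgeqv Sem.aso i j P Q) : HTmod P.gen ⊆ HTmod Q.gen := by
  have hM := forward_models hs
  rintro ⟨I, J⟩ ⟨hIJ, hsat⟩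
  have hJP : J ∈ models P.gen := fun φ hφ => satHT_sat hIJ (hsat φ hφ)
  have hJQ : J ∈ models Q.gen := hM ▸ hJP
  simp only at hIJ hsat
  rcases hIJ.ssubset_or_eq with hss | heq
  · by_contra hC
    have hnQ : ¬ SatHTTheory I J Q.gen := fun hq => hC ⟨hIJ, hq⟩
    have h := hs ⟨ctxIJ I J, ∅, Set.finite_empty⟩ emptyInterval
    have hsubQ : ∀ A ∈ outcomes Sem.aso (Q.union ⟨ctxIJ I J, ∅, Set.finite_empty⟩),
        ∀ B ∈ outcomes Sem.aso (Q.union ⟨ctxIJ I J, ∅, Set.finite_empty⟩), A = B := by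
      intro A hA B hB
      rw [((AS_union_ctxIJ hss).1 hA).1, ((AS_union_ctxIJ hss).1 hB).1]
    have hJpref : J ∈ pref Sem.aso (Q.union ⟨ctxIJ I J, ∅, Set.finite_empty⟩) := by
      rw [pref_of_subsingleton hsubQ]
      exact (AS_union_ctxIJ hss).2 ⟨rfl, hJQ, hnQ⟩
    rw [← h] at hJpref
    have hJout : J ∈ outcomes Sem.aso (P.union ⟨ctxIJ I J, ∅, Set.finite_empty⟩) := hJpref.1
    exact ((AS_union_ctxIJ hss).1 hJout).2.2 hsat
  · subst heq
    exact mem_models_iff_HT.1 hJQ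

end Part7
section Part8
variable {U : Type}

/-- Theory whose classical models are exactly `I` and `J` (when `a0 ∈ I \ J`). -/
noncomputable def pairTh (I J : Set U) (a0 : U) : Set (Formula U) :=
  Set.range (fun x => Formula.conj (.imp (.atom a0) (lit I x)) (.imp (fnot (.atom a0)) (lit J x)))

lemma satTheory_pairTh {I J M : Set U} {a0 : U} (haI : a0 ∈ I) (haJ : a0 ∉ J) :
    SatTheory M (pairTh I J a0) ↔ M = I ∨ M = J := by
  constructor
  · intro h
    by_cases ha : a0 ∈ M
    · left
      ext x
      exact sat_lit.1 ((h _ ⟨x, rfl⟩).1 ha)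
    · right
      ext x
      exact sat_lit.1 ((h _ ⟨x, rfl⟩).2 (fun hm => ha hm))
  · rintro (rfl | rfl) φ ⟨x, rfl⟩
    · exact ⟨fun _ => sat_lit.2 Iff.rfl, fun hn => absurd haI hn⟩
    · exact ⟨fun ha => absurd ha haJ, fun _ => sat_lit.2 Iff.rfl⟩

/-- The outcomes of `P` extended by the pair context are exactly `{I, J}`. -/
lemma outcomes_pair {P : OptProblem U} {I J : Set U} {a0 : U}
    (hI : I ∈ models P.gen) (hJ : J ∈ models P.gen) (haI : a0 ∈ I) (haJ : a0 ∉ J)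
    {SR : Set (Rule U)} (hfin : SR.Finite) :
    outcomes Sem.aso (P.union ⟨EMset ∪ pairTh I J a0, SR, hfin⟩) = {I, J} := by
  show AS (P.gen ∪ (EMset ∪ pairTh I J a0)) = _
  rw [AS_eq_models_of_EM (T := P.gen ∪ (EMset ∪ pairTh I J a0))
    (by intro φ hφ; exact Or.inr (Or.inl hφ))]
  ext M
  constructor
  · intro hM
    have h2 : SatTheory M (pairTh I J a0) := fun φ hφ => hM φ (Or.inr (Or.inr hφ))
    exact (satTheory_pairTh haI haJ).1 h2
  · rintro (rfl | rfl) <;>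
    · rintro φ (hφ | hφ | hφ)
      · first
          | exact hI φ hφ
          | exact hJ φ hφ
      · exact satTheory_EMset φ hφ
      · first
          | exact (satTheory_pairTh haI haJ).2 (Or.inl rfl) φ hφ
          | exact (satTheory_pairTh haI haJ).2 (Or.inr rfl) φ hφ

/-- The fundamental probe: adding the pair context shows that `I`-vs-`J` comparisons
agree for `P` and `Q` extended with any admissible selector. -/
lemma probe {i : ℕ} {j : ℕ∞} {P Q : OptProblem U}
    (hs : sgeqv Sem.aso i j P Q) {I J : Set U} {a0 : U}
    (hI : I ∈ models P.gen) (hJ : J ∈ models P.gen) (haI : a0 ∈ I) (haJ : a0 ∉ J)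
    {SR : Set (Rule U)} (hfin : SR.Finite) (hSR : inRankInterval i j SR) :
    (gtSel (P.sel ∪ SR) J I ↔ gtSel (Q.sel ∪ SR) J I) ∧
    (gtSel (P.sel ∪ SR) I J ↔ gtSel (Q.sel ∪ SR) I J) := by
  have hM := forward_models hs
  have hI' : I ∈ models Q.gen := hM ▸ hI
  have hJ' : J ∈ models Q.gen := hM ▸ hJ
  set R : OptProblem U := ⟨EMset ∪ pairTh I J a0, SR, hfin⟩ with hR
  have hRint : inRankInterval i j R.sel := hSR
  have hprefeq := hs R hRint
  have hOP : outcomes Sem.aso (P.union R) = {I, J} := outcomes_pair hI hJ haI haJ hfin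
  have hOQ : outcomes Sem.aso (Q.union R) = {I, J} := outcomes_pair hI' hJ' haI haJ hfin
  have hne : I ≠ J := fun h => haJ (h ▸ haI)
  have memP : ∀ A B : Set U, A ∈ ({I, J} : Set (Set U)) → B ∈ ({I, J} : Set (Set U)) → A ≠ B →
      ∀ T : OptProblem U, outcomes Sem.aso (T.union R) = {I, J} →
      (B ∈ pref Sem.aso (T.union R) ↔ ¬ gtSel (T.sel ∪ SR) A B) := by
    intro A B hA hB hAB T hout
    simp only [pref, Set.mem_setOf_eq, hout]
    constructor
    · rintro ⟨-, hn⟩ hg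
      exact hn ⟨A, hA, hg⟩
    · intro hn
      refine ⟨hB, ?_⟩
      rintro ⟨K, hK, hg⟩
      have hKA : K = A ∨ K = B := by
        rcases hK with rfl | rfl <;> rcases hA with rfl | rfl <;> rcases hB with rfl | rfl <;>
          first
            | exact Or.inl rfl
            | exact Or.inr rfl
            | exact absurd rfl hAB
      rcases hKA with rfl | rfl
      · exact hn hg
      · exact gtSel_irrefl hg
  constructor
  · have hmemP := memP J I (Or.inr rfl) (Or.inl rfl) hne.symm P hOP
    have hmemQ := memP J I (Or.inr rfl) (Or.inl rfl) hne.symm Q hOQ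
    rw [hprefeq] at hmemP
    exact not_iff_not.1 (hmemP.symm.trans hmemQ)
  · have hmemP := memP I J (Or.inl rfl) (Or.inr rfl) hne P hOP
    have hmemQ := memP I J (Or.inl rfl) (Or.inr rfl) hne Q hOQ
    rw [hprefeq] at hmemP
    exact not_iff_not.1 (hmemP.symm.trans hmemQ)

end Part8
section Part9
variable {U : Type}

/-- A probe rule of rank `ℓ` with head `[φ, ¬φ]` and tautological body. -/
def probeRule (φ : Formula U) (ℓ : ℕ) (hℓ : 1 ≤ ℓ) : Rule U :=
  ⟨[φ, fnot φ], topF, ℓ, by simp, hℓ⟩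

lemma degree_probeRule_pos {K : Set U} {φ : Formula U} {ℓ : ℕ} {hℓ : 1 ≤ ℓ}
    (h : Sat K φ) : degree K (probeRule φ ℓ hℓ) = 1 := by
  have hcond : Sat K (probeRule φ ℓ hℓ).body ∧ ∃ ψ ∈ (probeRule φ ℓ hℓ).head, Sat K ψ :=
    ⟨sat_topF, φ, by simp [probeRule], h⟩
  rw [degree, if_pos hcond]
  apply le_antisymm
  · apply Nat.sInf_le
    exact ⟨⟨0, by simp [probeRule]⟩, rfl, h⟩
  · apply le_csInf
    · exact ⟨1, ⟨0, by simp [probeRule]⟩, rfl, h⟩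
    rintro n ⟨k, rfl, -⟩
    exact Nat.le_add_left 1 _

lemma degree_probeRule_neg {K : Set U} {φ : Formula U} {ℓ : ℕ} {hℓ : 1 ≤ ℓ}
    (h : ¬ Sat K φ) : degree K (probeRule φ ℓ hℓ) = 2 := by
  have hsat2 : Sat K ((probeRule φ ℓ hℓ).head.get ⟨1, by simp [probeRule]⟩) := fun hs => h hs
  have hcond : Sat K (probeRule φ ℓ hℓ).body ∧ ∃ ψ ∈ (probeRule φ ℓ hℓ).head, Sat K ψ :=
    ⟨sat_topF, fnot φ, by simp [probeRule], fun hs => h hs⟩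
  rw [degree, if_pos hcond]
  apply le_antisymm
  · apply Nat.sInf_le
    exact ⟨⟨1, by simp [probeRule]⟩, rfl, hsat2⟩
  · apply le_csInf
    · exact ⟨2, ⟨1, by simp [probeRule]⟩, rfl, hsat2⟩
    rintro n ⟨k, rfl, hk⟩
    have hklen : (k : ℕ) < 2 := k.2
    interval_cases hkk : (k : ℕ)
    · exfalso
      apply h
      have : (probeRule φ ℓ hℓ).head.get k = φ := by
        have : k = (⟨0, by simp [probeRule]⟩ : Fin (probeRule φ ℓ hℓ).head.length) :=
          Fin.ext hkk
        rw [this]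
        rfl
      exact this ▸ hk
    · omega

lemma rank_probeRule {φ : Formula U} {ℓ : ℕ} {hℓ : 1 ≤ ℓ} : (probeRule φ ℓ hℓ).rank = ℓ := rfl

lemma dmin_singleton {r : Rule U} {K L : Set U} (h : degree K r ≠ degree L r) :
    dmin {r} K L = (r.rank : ℕ∞) := by
  rw [dmin_eq_coe_iff]
  have hmem : r.rank ∈ Dset {r} K L := ⟨r, rfl, rfl, h⟩
  refine ⟨⟨_, hmem⟩, le_antisymm (Nat.sInf_le hmem) ?_⟩
  apply le_csInf ⟨_, hmem⟩
  rintro n ⟨r', hr', rfl, -⟩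
  rw [Set.mem_singleton_iff] at hr'
  rw [hr']

/-- ClaimA : adding a single rule of rank `ℓ` strictly favoring `L` over `K`. -/
lemma claimA {S : Set (Rule U)} {r : Rule U} {K L : Set U} {ℓ : ℕ}
    (hrank : r.rank = ℓ) (hdeg : degree L r < degree K r) :
    gtSel (S ∪ {r}) K L ↔ (dmin S K L < (ℓ : ℕ∞) ∧ gtSel S K L) := by
  have hdr : dmin {r} K L = (ℓ : ℕ∞) := hrank ▸ dmin_singleton (ne_of_gt hdeg)
  rw [gtSel_union_iff]
  constructor
  · rintro ⟨n, hmin, hLS, hLr⟩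
    have hnℓ : n ≠ ℓ := by
      rintro rfl
      exact absurd (hLr r rfl hrank) (not_le.2 hdeg)
    rw [hdr] at hmin
    have hlt : dmin S K L < (ℓ : ℕ∞) := by
      rcases lt_or_ge (dmin S K L) ((ℓ : ℕ∞)) with h | h
      · exact h
      · rw [min_eq_right h] at hmin
        exact absurd (by exact_mod_cast hmin.symm) hnℓ
    rw [min_eq_left hlt.le] at hmin
    exact ⟨hlt, gtSel_iff'.2 ⟨n, hmin, hLS⟩⟩
  · rintro ⟨hlt, hgt⟩
    obtain ⟨n, hd, hLS⟩ := gtSel_iff'.1 hgt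
    refine ⟨n, ?_, hLS, ?_⟩
    · rw [hdr, min_eq_left hlt.le]; exact hd
    · intro r' hr' hrank'
      rw [Set.mem_singleton_iff] at hr'
      subst hr'
      exfalso
      rw [hd] at hlt
      have : n < ℓ := by exact_mod_cast hlt
      omega
      
/-- ClaimB : adding a single rule of rank `ℓ` strictly favoring `K` over `L`. -/
lemma claimB {S : Set (Rule U)} {r : Rule U} {K L : Set U} {ℓ : ℕ}
    (hrank : r.rank = ℓ) (hdeg : degree K r < degree L r) :
    gtSel (S ∪ {r}) K L ↔ ((ℓ : ℕ∞) < dmin S K L ∨ gtSel S K L) := by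
  have hdr : dmin {r} K L = (ℓ : ℕ∞) := hrank ▸ dmin_singleton (ne_of_lt hdeg)
  rw [gtSel_union_iff]
  constructor
  · rintro ⟨n, hmin, hLS, hLr⟩
    rcases le_or_gt (dmin S K L) ((ℓ : ℕ∞)) with h | h
    · right
      rw [hdr, min_eq_left h] at hmin
      exact gtSel_iff'.2 ⟨n, hmin, hLS⟩
    · exact Or.inl h
  · rintro (h | hgt)
    · refine ⟨ℓ, ?_, Lok_of_lt h, ?_⟩
      · rw [hdr, min_eq_right h.le]
      · intro r' hr' _
        rw [Set.mem_singleton_iff] at hr'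
        subst hr'
        exact hdeg.le
    · obtain ⟨n, hd, hLS⟩ := gtSel_iff'.1 hgt
      rcases lt_trichotomy n ℓ with h | h | h
      · refine ⟨n, ?_, hLS, ?_⟩
        · rw [hdr, min_eq_left (by rw [hd]; exact_mod_cast h.le)]; exact hd
        · intro r' hr' hrank'
          rw [Set.mem_singleton_iff] at hr'
          subst hr'
          omega
      · subst h
        refine ⟨n, ?_, hLS, ?_⟩
        · rw [hdr, hd, min_self]
        · intro r' hr' _
          rw [Set.mem_singleton_iff] at hr'
          subst hr'
          exact hdeg.le
      · refine ⟨ℓ, ?_, Lok_of_lt (by rw [hd]; exact_mod_cast h), ?_⟩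
        · rw [hdr, min_eq_right (by rw [hd]; exact_mod_cast h.le)]
        · intro r' hr' _
          rw [Set.mem_singleton_iff] at hr'
          subst hr'
          exact hdeg.le

end Part9
section Part10
variable {U : Type}

lemma dmin_self {S : Set (Rule U)} {A : Set U} : dmin S A A = ⊤ :=
  dmin_eq_top_iff.2 (fun _ _ => rfl)

lemma exists_distinguisher {A B : Set U} (h : A ≠ B) :
    ∃ a0 : U, (a0 ∈ A ∧ a0 ∉ B) ∨ (a0 ∈ B ∧ a0 ∉ A) := by
  by_contra hc
  push_neg at hc
  apply h
  ext x
  have := hc x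
  tauto

lemma singletonInterval {i : ℕ} {j : ℕ∞} {r : Rule U} (h1 : i ≤ r.rank)
    (h2 : (r.rank : ℕ∞) ≤ j) : inRankInterval i j ({r} : Set (Rule U)) := by
  rintro r' hr'
  rw [Set.mem_singleton_iff] at hr'
  subst hr'
  exact ⟨h1, h2⟩

lemma e2_lemma {i : ℕ} {j : ℕ∞} {P Q : OptProblem U} (hs : sgeqv Sem.aso i j P Q) :
    ∀ A ∈ models P.gen, ∀ B ∈ models P.gen, (gtSel P.sel A B ↔ gtSel Q.sel A B) := by
  intro A hA B hB
  by_cases hAB : A = B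
  · subst hAB
    exact iff_of_false gtSel_irrefl gtSel_irrefl
  obtain ⟨a0, ha0 | ha0⟩ := exists_distinguisher hAB
  · have hp := probe hs hA hB ha0.1 ha0.2 Set.finite_empty emptyInterval
    rw [Set.union_empty, Set.union_empty] at hp
    exact hp.2
  · have hp := probe hs hB hA ha0.1 ha0.2 Set.finite_empty emptyInterval
    rw [Set.union_empty, Set.union_empty] at hp
    exact hp.1

lemma e4_lemma {i : ℕ} {j : ℕ∞} {P Q : OptProblem U} (hs : sgeqv Sem.aso i j P Q)
    (hi : 1 ≤ i) (hij : (i : ℕ∞) ≤ j) :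
    ∀ A ∈ models P.gen, ∀ B ∈ models P.gen,
      (gtSel (P.below i).sel A B ↔ gtSel (Q.below i).sel A B) := by
  intro A hA B hB
  by_cases hAB : A = B
  · subst hAB
    exact iff_of_false gtSel_irrefl gtSel_irrefl
  obtain ⟨a0, ha0 | ha0⟩ := exists_distinguisher hAB
  · -- a0 ∈ A \ B ; favor B using ¬a0
    set r : Rule U := probeRule (fnot (.atom a0)) i hi with hrdef
    have hdB : degree B r = 1 := degree_probeRule_pos (fun h => ha0.2 h)
    have hdA : degree A r = 2 := degree_probeRule_neg (fun hh => hh ha0.1)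
    have hdeg : degree B r < degree A r := by rw [hdB, hdA]; omega
    have hp := probe hs hA hB ha0.1 ha0.2 (Set.finite_singleton r)
      (singletonInterval (le_refl i) hij)
    rw [gtSel_below_iff, gtSel_below_iff,
      ← claimA (S := P.sel) (ℓ := i) rfl hdeg, ← claimA (S := Q.sel) (ℓ := i) rfl hdeg]
    exact hp.2
  · -- a0 ∈ B \ A ; favor B using a0
    set r : Rule U := probeRule (.atom a0) i hi with hrdef
    have hdB : degree B r = 1 := degree_probeRule_pos ha0.1
    have hdA : degree A r = 2 := degree_probeRule_neg ha0.2
    have hdeg : degree B r < degree A r := by rw [hdB, hdA]; omega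
    have hp := probe hs hB hA ha0.1 ha0.2 (Set.finite_singleton r)
      (singletonInterval (le_refl i) hij)
    rw [gtSel_below_iff, gtSel_below_iff,
      ← claimA (S := P.sel) (ℓ := i) rfl hdeg, ← claimA (S := Q.sel) (ℓ := i) rfl hdeg]
    exact hp.1

lemma e3_lemma {i : ℕ} {j : ℕ∞} {P Q : OptProblem U} (hs : sgeqv Sem.aso i j P Q)
    (hi : 1 ≤ i) (hij : (i : ℕ∞) ≤ j) :
    ∀ A ∈ models P.gen, ∀ B ∈ models P.gen,
      (((i : ℕ∞) < dmin P.sel A B ∨ (i : ℕ∞) < dmin Q.sel A B) →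
        (dmin P.sel A B = dmin Q.sel A B ∨
          (j < dmin P.sel A B ∧ j < dmin Q.sel A B))) := by
  intro A hA B hB hprem
  by_cases hAB : A = B
  · subst hAB
    rw [dmin_self, dmin_self]
    exact Or.inl rfl
  obtain ⟨a0, ha0⟩ := exists_distinguisher hAB
  -- formulas separating the two sets in each direction
  obtain ⟨φA, hφA, hφA'⟩ : ∃ φ : Formula U, Sat A φ ∧ ¬ Sat B φ := by
    rcases ha0 with ha0 | ha0
    · exact ⟨.atom a0, ha0.1, ha0.2⟩
    · exact ⟨fnot (.atom a0), fun h => ha0.2 h, fun hh => hh ha0.1⟩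
  obtain ⟨φB, hφB, hφB'⟩ : ∃ φ : Formula U, Sat B φ ∧ ¬ Sat A φ := by
    rcases ha0 with ha0 | ha0
    · exact ⟨fnot (.atom a0), fun h => ha0.2 h, fun hh => hh ha0.1⟩
    · exact ⟨.atom a0, ha0.1, ha0.2⟩
  have hprobe : ∀ (SR : Set (Rule U)) (hfin : SR.Finite), inRankInterval i j SR →
      ((gtSel (P.sel ∪ SR) B A ↔ gtSel (Q.sel ∪ SR) B A) ∧
       (gtSel (P.sel ∪ SR) A B ↔ gtSel (Q.sel ∪ SR) A B)) := by
    intro SR hfin hint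
    rcases ha0 with ha0 | ha0
    · exact probe hs hA hB ha0.1 ha0.2 hfin hint
    · exact (probe hs hB hA ha0.1 ha0.2 hfin hint).symm
  have hgAB : gtSel P.sel A B ↔ gtSel Q.sel A B := e2_lemma hs A hA B hB
  have hgBA : gtSel P.sel B A ↔ gtSel Q.sel B A := e2_lemma hs B hB A hA
  -- the scanning family
  have E : ∀ ℓ : ℕ, i ≤ ℓ → (ℓ : ℕ∞) ≤ j →
      (((ℓ : ℕ∞) < dmin P.sel A B) ↔ ((ℓ : ℕ∞) < dmin Q.sel A B)) := by
    intro ℓ hiℓ hℓj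
    have hℓ1 : 1 ≤ ℓ := hi.trans hiℓ
    by_cases hg : gtSel P.sel B A
    · -- then ¬ gtSel _ A B on both sides ; favor A, probe orientation (A,B)
      have hnAB : ¬ gtSel P.sel A B := fun h => gtSel_asymm h hg
      have hnAB' : ¬ gtSel Q.sel A B := fun h => hnAB (hgAB.2 h)
      set r : Rule U := probeRule φA ℓ hℓ1 with hrdef
      have hdeg : degree A r < degree B r := by
        rw [degree_probeRule_pos hφA, degree_probeRule_neg hφA']; omega
      have hp := (hprobe {r} (Set.finite_singleton r) (singletonInterval hiℓ hℓj)).2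
      rw [claimB (S := P.sel) rfl hdeg, claimB (S := Q.sel) rfl hdeg] at hp
      constructor
      · intro h
        rcases hp.1 (Or.inl h) with h' | h'
        exacts [h', absurd h' hnAB']
      · intro h
        rcases hp.2 (Or.inl h) with h' | h'
        exacts [h', absurd h' hnAB]
    · -- ¬ gtSel _ B A on both sides ; favor B, probe orientation (B,A)
      have hnBA' : ¬ gtSel Q.sel B A := fun h => hg (hgBA.2 h)
      set r : Rule U := probeRule φB ℓ hℓ1 with hrdef
      have hdeg : degree B r < degree A r := by
        rw [degree_probeRule_pos hφB, degree_probeRule_neg hφB']; omega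
      have hp := (hprobe {r} (Set.finite_singleton r) (singletonInterval hiℓ hℓj)).1
      rw [claimB (S := P.sel) rfl hdeg, claimB (S := Q.sel) rfl hdeg] at hp
      rw [dmin_comm P.sel, dmin_comm Q.sel] at hp
      constructor
      · intro h
        rcases hp.1 (Or.inl h) with h' | h'
        exacts [h', absurd h' hnBA']
      · intro h
        rcases hp.2 (Or.inl h) with h' | h'
        exacts [h', absurd h' hg]
  -- final arithmetic
  set dP := dmin P.sel A B with hdP
  set dQ := dmin Q.sel A B with hdQ
  by_contra hc
  push_neg at hc
  obtain ⟨hne, hj⟩ := hc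
  have hEi := E i (le_refl i) hij
  have hiP : (i : ℕ∞) < dP := by
    rcases hprem with h | h
    exacts [h, hEi.2 h]
  have hiQ : (i : ℕ∞) < dQ := hEi.1 hiP
  rcases lt_trichotomy dP dQ with hlt | heq | hlt
  · obtain ⟨nP, hnP⟩ : ∃ nP : ℕ, dP = (nP : ℕ∞) := by
      cases h : dP with
      | top => rw [h] at hlt; exact absurd hlt (not_lt.2 le_top)
      | coe m => exact ⟨m, rfl⟩
    have hinP : i ≤ nP := by
      rw [hnP] at hiP
      exact_mod_cast hiP.le
    have hnPj : (nP : ℕ∞) ≤ j := by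
      rw [← hnP]
      by_contra hcn
      push_neg at hcn
      exact absurd (hcn.trans hlt) (not_lt.2 (hj hcn))
    have hE := E nP hinP hnPj
    rw [hnP] at hE
    exact absurd (hE.2 (hnP ▸ hlt)) (lt_irrefl _)
  · exact hne heq
  · obtain ⟨nQ, hnQ⟩ : ∃ nQ : ℕ, dQ = (nQ : ℕ∞) := by
      cases h : dQ with
      | top => rw [h] at hlt; exact absurd hlt (not_lt.2 le_top)
      | coe m => exact ⟨m, rfl⟩
    have hinQ : i ≤ nQ := by
      rw [hnQ] at hiQ
      exact_mod_cast hiQ.le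
    have hnQj : (nQ : ℕ∞) ≤ j := by
      rw [← hnQ]
      by_contra hcn
      push_neg at hcn
      exact absurd hcn (not_lt.2 (hj (hcn.trans hlt)))
    have hE := E nQ hinQ hnQj
    rw [hnQ] at hE
    exact absurd (hE.1 (hnQ ▸ hlt)) (lt_irrefl _)

end Part10
/-- Theorem 11, ASO case: characterization of combined strong equivalence
`P ≡^{s,[i,j]}_g Q` for ranked ASO problems. -/
theorem stmt12 {U : Type} [Countable U] (P Q : OptProblem U)
    (i : ℕ) (j : ℕ∞) (hi : 1 ≤ i) (hij : (i : ℕ∞) ≤ j) :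
    sgeqv Sem.aso i j P Q ↔
      (HTmod P.gen = HTmod Q.gen ∧
       restrictRel (gtSel P.sel) (models P.gen) =
         restrictRel (gtSel Q.sel) (models Q.gen) ∧
       (∀ I ∈ models P.gen, ∀ J ∈ models P.gen,
         ((i : ℕ∞) < diff P I J ∨ (i : ℕ∞) < diff Q I J) →
           (diff P I J = diff Q I J ∨ (j < diff P I J ∧ j < diff Q I J))) ∧
       restrictRel (gtSel (P.below i).sel) (models P.gen) =
         restrictRel (gtSel (Q.below i).sel) (models Q.gen)) := by
  constructor
  · intro hs
    have c1 : HTmod P.gen = HTmod Q.gen :=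
      Set.Subset.antisymm (forward_HT_sub hs) (forward_HT_sub (sgeqv_symm hs))
    have hM : models P.gen = models Q.gen := models_eq_of_HTeq c1
    refine ⟨c1, ?_, ?_, ?_⟩
    · funext A B
      apply propext
      unfold restrictRel
      constructor
      · rintro ⟨hg, hA, hB⟩
        exact ⟨(e2_lemma hs A hA B hB).1 hg, hM ▸ hA, hM ▸ hB⟩
      · rintro ⟨hg, hA, hB⟩
        have hA' : A ∈ models P.gen := hM ▸ hA
        have hB' : B ∈ models P.gen := hM ▸ hB
        exact ⟨(e2_lemma hs A hA' B hB').2 hg, hA', hB'⟩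
    · intro I hI J hJ hpre
      rw [diff_eq_dmin, diff_eq_dmin] at hpre ⊢
      exact e3_lemma hs hi hij I hI J hJ hpre
    · funext A B
      apply propext
      unfold restrictRel
      constructor
      · rintro ⟨hg, hA, hB⟩
        exact ⟨(e4_lemma hs hi hij A hA B hB).1 hg, hM ▸ hA, hM ▸ hB⟩
      · rintro ⟨hg, hA, hB⟩
        have hA' : A ∈ models P.gen := hM ▸ hA
        have hB' : B ∈ models P.gen := hM ▸ hB
        exact ⟨(e4_lemma hs hi hij A hA' B hB').2 hg, hA', hB'⟩
  · rintro ⟨c1, c2, c3, c4⟩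
    exact backward hij c1 c2 c3 c4
end
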